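/- Let p : Fin 4 → ℝ² be a quadrilateral in general position with Q-value Q. Then Q = 2 if and only if the quadrilateral is concave and non-self-intersecting, in the sense that there exists an index i such that p_i lies in the interior of the convex hull of the other three points {p_j : j ≠ i}. -/
import Mathlib


/-- The cross value of three points in the plane: the z-coordinate of the
cross product `(b - a) × (c - b)`. -/
noncomputable def cross (a b c : ℝ × ℝ) : ℝ :=
  (b.1 - a.1) * (c.2 - b.2) - (b.2 - a.2) * (c.1 - b.1)

lemma cross_cyclic (a b c : ℝ × ℝ) : cross a b c = cross b c a := by
  simp only [cross]; ring

lemma notCollinear (q0 q1 q2 : ℝ × ℝ) (h : cross q0 q1 q2 ≠ 0) :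
    ¬ Collinear ℝ ({q0, q1, q2} : Set (ℝ × ℝ)) := by
  intro hc
  rw [collinear_iff_of_mem (Set.mem_insert q0 _)] at hc
  obtain ⟨v, hv⟩ := hc
  obtain ⟨r, hr⟩ := hv q1 (by simp)
  obtain ⟨s, hs⟩ := hv q2 (by simp)
  apply h
  simp only [cross, hr, hs, vadd_eq_add, Prod.smul_fst, Prod.smul_snd, Prod.fst_add, Prod.snd_add, smul_eq_mul]
  ring

noncomputable def triBasis (q : Fin 3 → ℝ × ℝ) (h : cross (q 0) (q 1) (q 2) ≠ 0) :
    AffineBasis (Fin 3) ℝ (ℝ × ℝ) := by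
  have hind : AffineIndependent ℝ q := by
    rw [affineIndependent_iff_not_collinear]
    have : Set.range q = {q 0, q 1, q 2} := by
      ext x; simp [Fin.exists_fin_succ_pi]; constructor
      · rintro ⟨i, rfl⟩; fin_cases i <;> simp
      · rintro (rfl | rfl | rfl) <;> [exact ⟨0, rfl⟩; exact ⟨1, rfl⟩; exact ⟨2, rfl⟩]
    rw [this]
    exact notCollinear _ _ _ h
  refine ⟨q, hind, ?_⟩
  rw [hind.affineSpan_eq_top_iff_card_eq_finrank_add_one]
  simp

lemma coe_triBasis (q : Fin 3 → ℝ × ℝ) (h : cross (q 0) (q 1) (q 2) ≠ 0) :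
    ⇑(triBasis q h) = q := rfl

lemma mem_interior_triangle (q : Fin 3 → ℝ × ℝ) (h : cross (q 0) (q 1) (q 2) ≠ 0) (x : ℝ × ℝ) :
    x ∈ interior (convexHull ℝ (Set.range q)) ↔
      (0 < cross x (q 1) (q 2) / cross (q 0) (q 1) (q 2) ∧
       0 < cross (q 0) x (q 2) / cross (q 0) (q 1) (q 2) ∧
       0 < cross (q 0) (q 1) x / cross (q 0) (q 1) (q 2)) := by
  set b := triBasis q h with hb
  have hrange : Set.range q = Set.range ⇑b := by rw [coe_triBasis]
  rw [hrange, b.interior_convexHull]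
  set w : Fin 3 → ℝ := ![cross x (q 1) (q 2) / cross (q 0) (q 1) (q 2),
    cross (q 0) x (q 2) / cross (q 0) (q 1) (q 2),
    cross (q 0) (q 1) x / cross (q 0) (q 1) (q 2)] with hwdef
  have hsum : cross x (q 1) (q 2) + cross (q 0) x (q 2) + cross (q 0) (q 1) x
      = cross (q 0) (q 1) (q 2) := by simp only [cross]; ring
  have hw : ∑ i : Fin 3, w i = 1 := by
    simp only [hwdef, Fin.sum_univ_three, Matrix.cons_val_zero, Matrix.cons_val_one,
      Matrix.head_cons, Matrix.cons_val_two, Matrix.tail_cons]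
    field_simp
    linarith [hsum]
  have hx : Finset.univ.affineCombination ℝ q w = x := by
    rw [Finset.affineCombination_eq_linear_combination _ _ _ hw]
    simp only [hwdef, Fin.sum_univ_three, Matrix.cons_val_zero, Matrix.cons_val_one,
      Matrix.head_cons, Matrix.cons_val_two, Matrix.tail_cons]
    have hA := h
    apply Prod.ext <;>
    · simp only [Prod.fst_add, Prod.snd_add, Prod.smul_fst, Prod.smul_snd, smul_eq_mul]
      field_simp
      simp only [cross]
      ring
  have hcoord : ∀ i, b.coord i x = w i := by
    intro i
    rw [← hx]
    exact b.coord_apply_combination_of_mem (Finset.mem_univ i) hw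
  constructor
  · intro hmem
    have h0 := hmem 0; have h1 := hmem 1; have h2 := hmem 2
    rw [hcoord] at h0 h1 h2
    simp only [hwdef, Matrix.cons_val_zero, Matrix.cons_val_one, Matrix.head_cons,
      Matrix.cons_val_two, Matrix.tail_cons] at h0 h1 h2
    exact ⟨h0, h1, h2⟩
  · rintro ⟨h0, h1, h2⟩ i
    show 0 < b.coord i x
    rw [hcoord i]
    fin_cases i <;> simpa [hwdef]

lemma key (a b c x : ℝ × ℝ) (h : cross a b c ≠ 0) :
    x ∈ interior (convexHull ℝ ({a, b, c} : Set (ℝ × ℝ))) ↔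
      (0 < cross x b c / cross a b c ∧ 0 < cross a x c / cross a b c ∧
       0 < cross a b x / cross a b c) := by
  have hr : ({a, b, c} : Set (ℝ × ℝ)) = Set.range ![a, b, c] := by
    ext y; constructor
    · intro hy
      simp only [Set.mem_insert_iff, Set.mem_singleton_iff] at hy
      rcases hy with rfl | rfl | rfl
      exacts [⟨0, rfl⟩, ⟨1, rfl⟩, ⟨2, rfl⟩]
    · rintro ⟨i, rfl⟩; fin_cases i <;> simp
  rw [hr, mem_interior_triangle ![a, b, c] (by exact h) x]
  simp [Matrix.cons_val_zero, Matrix.cons_val_one, Matrix.head_cons]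

lemma pos_of_div_pos_pos {x y : ℝ} (h : 0 < x / y) (hy : 0 < y) : 0 < x := by
  rcases div_pos_iff.mp h with ⟨hx, _⟩ | ⟨_, hy'⟩
  · exact hx
  · linarith

lemma neg_of_div_pos_neg {x y : ℝ} (h : 0 < x / y) (hy : y < 0) : x < 0 := by
  rcases div_pos_iff.mp h with ⟨_, hy'⟩ | ⟨hx, _⟩
  · linarith
  · exact hx

/-- A quadrilateral `p : Fin 4 → ℝ²` is in general position if no three of its
four points are collinear. -/
def GeneralPosition (p : Fin 4 → ℝ × ℝ) : Prop :=
  ∀ i j k : Fin 4, i ≠ j → i ≠ k → j ≠ k → cross (p i) (p j) (p k) ≠ 0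

/-- The Q-value of a quadrilateral: `|∑ i, sgn (cross (p (i-1)) (p i) (p (i+1)))|`. -/
noncomputable def Qvalue (p : Fin 4 → ℝ × ℝ) : ℝ :=
  |∑ i : Fin 4, Real.sign (cross (p (i - 1)) (p i) (p (i + 1)))|

theorem Qvalue_eq_two_iff_concave_nonSelfIntersecting (p : Fin 4 → ℝ × ℝ)
    (hp : GeneralPosition p) :
    Qvalue p = 2 ↔
      ∃ i : Fin 4, p i ∈ interior (convexHull ℝ (p '' {j | j ≠ i})) := by
  have hA : cross (p 0) (p 1) (p 2) ≠ 0 := hp 0 1 2 (by decide) (by decide) (by decide)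
  have hB : cross (p 0) (p 1) (p 3) ≠ 0 := hp 0 1 3 (by decide) (by decide) (by decide)
  have hC : cross (p 0) (p 2) (p 3) ≠ 0 := hp 0 2 3 (by decide) (by decide) (by decide)
  have hD : cross (p 1) (p 2) (p 3) ≠ 0 := hp 1 2 3 (by decide) (by decide) (by decide)
  have f1 : cross (p 1) (p 0) (p 3) = -cross (p 0) (p 1) (p 3) := by simp only [cross]; ring
  have f2 : cross (p 1) (p 2) (p 0) = cross (p 0) (p 1) (p 2) := by simp only [cross]; ring
  have f3 : cross (p 0) (p 2) (p 1) = -cross (p 0) (p 1) (p 2) := by simp only [cross]; ring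
  have f4 : cross (p 2) (p 1) (p 3) = -cross (p 1) (p 2) (p 3) := by simp only [cross]; ring
  have f5 : cross (p 3) (p 1) (p 2) = cross (p 1) (p 2) (p 3) := by simp only [cross]; ring
  have f6 : cross (p 0) (p 3) (p 2) = -cross (p 0) (p 2) (p 3) := by simp only [cross]; ring
  have s0 : ({j : Fin 4 | j ≠ 0}) = {1, 2, 3} := by
    ext j; fin_cases j <;> simp
  have s1 : ({j : Fin 4 | j ≠ 1}) = {0, 2, 3} := by
    ext j; fin_cases j <;> simp
  have s2 : ({j : Fin 4 | j ≠ 2}) = {0, 1, 3} := by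
    ext j; fin_cases j <;> simp
  have s3 : ({j : Fin 4 | j ≠ 3}) = {0, 1, 2} := by
    ext j; fin_cases j <;> simp
  have i0 : p '' {j | j ≠ 0} = {p 1, p 2, p 3} := by
    rw [s0, Set.image_insert_eq, Set.image_insert_eq, Set.image_singleton]
  have i1 : p '' {j | j ≠ 1} = {p 0, p 2, p 3} := by
    rw [s1, Set.image_insert_eq, Set.image_insert_eq, Set.image_singleton]
  have i2 : p '' {j | j ≠ 2} = {p 0, p 1, p 3} := by
    rw [s2, Set.image_insert_eq, Set.image_insert_eq, Set.image_singleton]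
  have i3 : p '' {j | j ≠ 3} = {p 0, p 1, p 2} := by
    rw [s3, Set.image_insert_eq, Set.image_insert_eq, Set.image_singleton]
  have m0 : p 0 ∈ interior (convexHull ℝ (p '' {j | j ≠ 0})) ↔
      (0 < cross (p 0) (p 2) (p 3) / cross (p 1) (p 2) (p 3) ∧
       0 < -cross (p 0) (p 1) (p 3) / cross (p 1) (p 2) (p 3) ∧
       0 < cross (p 0) (p 1) (p 2) / cross (p 1) (p 2) (p 3)) := by
    rw [i0, key (p 1) (p 2) (p 3) (p 0) hD, f1, f2]
  have m1 : p 1 ∈ interior (convexHull ℝ (p '' {j | j ≠ 1})) ↔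
      (0 < cross (p 1) (p 2) (p 3) / cross (p 0) (p 2) (p 3) ∧
       0 < cross (p 0) (p 1) (p 3) / cross (p 0) (p 2) (p 3) ∧
       0 < -cross (p 0) (p 1) (p 2) / cross (p 0) (p 2) (p 3)) := by
    rw [i1, key (p 0) (p 2) (p 3) (p 1) hC, f3]
  have m2 : p 2 ∈ interior (convexHull ℝ (p '' {j | j ≠ 2})) ↔
      (0 < -cross (p 1) (p 2) (p 3) / cross (p 0) (p 1) (p 3) ∧
       0 < cross (p 0) (p 2) (p 3) / cross (p 0) (p 1) (p 3) ∧
       0 < cross (p 0) (p 1) (p 2) / cross (p 0) (p 1) (p 3)) := by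
    rw [i2, key (p 0) (p 1) (p 3) (p 2) hB, f4]
  have m3 : p 3 ∈ interior (convexHull ℝ (p '' {j | j ≠ 3})) ↔
      (0 < cross (p 1) (p 2) (p 3) / cross (p 0) (p 1) (p 2) ∧
       0 < -cross (p 0) (p 2) (p 3) / cross (p 0) (p 1) (p 2) ∧
       0 < cross (p 0) (p 1) (p 3) / cross (p 0) (p 1) (p 2)) := by
    rw [i3, key (p 0) (p 1) (p 2) (p 3) hA, f5, f6]
  have hQ : Qvalue p = |Real.sign (cross (p 0) (p 1) (p 3)) +
      Real.sign (cross (p 0) (p 1) (p 2)) + Real.sign (cross (p 1) (p 2) (p 3)) +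
      Real.sign (cross (p 0) (p 2) (p 3))| := by
    unfold Qvalue
    rw [Fin.sum_univ_four]
    rw [show (0 : Fin 4) - 1 = 3 by decide, show (0 : Fin 4) + 1 = 1 by decide,
      show (1 : Fin 4) - 1 = 0 by decide, show (1 : Fin 4) + 1 = 2 by decide,
      show (2 : Fin 4) - 1 = 1 by decide, show (2 : Fin 4) + 1 = 3 by decide,
      show (3 : Fin 4) - 1 = 2 by decide, show (3 : Fin 4) + 1 = 0 by decide]
    rw [show cross (p 3) (p 0) (p 1) = cross (p 0) (p 1) (p 3) by simp only [cross]; ring,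
      show cross (p 2) (p 3) (p 0) = cross (p 0) (p 2) (p 3) by simp only [cross]; ring]
  constructor
  · intro h2
    rw [hQ] at h2
    rcases hA.lt_or_gt with hA' | hA' <;> rcases hB.lt_or_gt with hB' | hB' <;>
      rcases hC.lt_or_gt with hC' | hC' <;> rcases hD.lt_or_gt with hD' | hD'
    · rw [Real.sign_of_neg hA', Real.sign_of_neg hB', Real.sign_of_neg hC', Real.sign_of_neg hD'] at h2
      norm_num at h2
    · rw [Real.sign_of_neg hA', Real.sign_of_neg hB', Real.sign_of_neg hC', Real.sign_of_pos hD'] at h2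
      exact ⟨2, m2.mpr ⟨div_pos_of_neg_of_neg (by linarith) hB', div_pos_of_neg_of_neg hC' hB', div_pos_of_neg_of_neg hA' hB'⟩⟩
    · rw [Real.sign_of_neg hA', Real.sign_of_neg hB', Real.sign_of_pos hC', Real.sign_of_neg hD'] at h2
      exact ⟨3, m3.mpr ⟨div_pos_of_neg_of_neg hD' hA', div_pos_of_neg_of_neg (by linarith) hA', div_pos_of_neg_of_neg hB' hA'⟩⟩
    · rw [Real.sign_of_neg hA', Real.sign_of_neg hB', Real.sign_of_pos hC', Real.sign_of_pos hD'] at h2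
      norm_num at h2
    · rw [Real.sign_of_neg hA', Real.sign_of_pos hB', Real.sign_of_neg hC', Real.sign_of_neg hD'] at h2
      exact ⟨0, m0.mpr ⟨div_pos_of_neg_of_neg hC' hD', div_pos_of_neg_of_neg (by linarith) hD', div_pos_of_neg_of_neg hA' hD'⟩⟩
    · rw [Real.sign_of_neg hA', Real.sign_of_pos hB', Real.sign_of_neg hC', Real.sign_of_pos hD'] at h2
      norm_num at h2
    · rw [Real.sign_of_neg hA', Real.sign_of_pos hB', Real.sign_of_pos hC', Real.sign_of_neg hD'] at h2
      norm_num at h2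
    · rw [Real.sign_of_neg hA', Real.sign_of_pos hB', Real.sign_of_pos hC', Real.sign_of_pos hD'] at h2
      exact ⟨1, m1.mpr ⟨div_pos hD' hC', div_pos hB' hC', div_pos (by linarith) hC'⟩⟩
    · rw [Real.sign_of_pos hA', Real.sign_of_neg hB', Real.sign_of_neg hC', Real.sign_of_neg hD'] at h2
      exact ⟨1, m1.mpr ⟨div_pos_of_neg_of_neg hD' hC', div_pos_of_neg_of_neg hB' hC', div_pos_of_neg_of_neg (by linarith) hC'⟩⟩
    · rw [Real.sign_of_pos hA', Real.sign_of_neg hB', Real.sign_of_neg hC', Real.sign_of_pos hD'] at h2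
      norm_num at h2
    · rw [Real.sign_of_pos hA', Real.sign_of_neg hB', Real.sign_of_pos hC', Real.sign_of_neg hD'] at h2
      norm_num at h2
    · rw [Real.sign_of_pos hA', Real.sign_of_neg hB', Real.sign_of_pos hC', Real.sign_of_pos hD'] at h2
      exact ⟨0, m0.mpr ⟨div_pos hC' hD', div_pos (by linarith) hD', div_pos hA' hD'⟩⟩
    · rw [Real.sign_of_pos hA', Real.sign_of_pos hB', Real.sign_of_neg hC', Real.sign_of_neg hD'] at h2
      norm_num at h2
    · rw [Real.sign_of_pos hA', Real.sign_of_pos hB', Real.sign_of_neg hC', Real.sign_of_pos hD'] at h2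
      exact ⟨3, m3.mpr ⟨div_pos hD' hA', div_pos (by linarith) hA', div_pos hB' hA'⟩⟩
    · rw [Real.sign_of_pos hA', Real.sign_of_pos hB', Real.sign_of_pos hC', Real.sign_of_neg hD'] at h2
      exact ⟨2, m2.mpr ⟨div_pos (by linarith) hB', div_pos hC' hB', div_pos hA' hB'⟩⟩
    · rw [Real.sign_of_pos hA', Real.sign_of_pos hB', Real.sign_of_pos hC', Real.sign_of_pos hD'] at h2
      norm_num at h2
  · rintro ⟨i, hi⟩
    rw [hQ]
    fin_cases i
    · replace hi : p 0 ∈ interior (convexHull ℝ (p '' {j | j ≠ 0})) := hi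
      rw [m0] at hi
      obtain ⟨g1, g2, g3⟩ := hi
      rcases hD.lt_or_gt with hd | hd
      · have hC' : cross (p 0) (p 2) (p 3) < 0 := by have := neg_of_div_pos_neg g1 hd; linarith
        have hB' : 0 < cross (p 0) (p 1) (p 3) := by have := neg_of_div_pos_neg g2 hd; linarith
        have hA' : cross (p 0) (p 1) (p 2) < 0 := by have := neg_of_div_pos_neg g3 hd; linarith
        rw [Real.sign_of_neg hA', Real.sign_of_pos hB', Real.sign_of_neg hC', Real.sign_of_neg hd]
        norm_num
      · have hC' : 0 < cross (p 0) (p 2) (p 3) := by have := pos_of_div_pos_pos g1 hd; linarith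
        have hB' : cross (p 0) (p 1) (p 3) < 0 := by have := pos_of_div_pos_pos g2 hd; linarith
        have hA' : 0 < cross (p 0) (p 1) (p 2) := by have := pos_of_div_pos_pos g3 hd; linarith
        rw [Real.sign_of_pos hA', Real.sign_of_neg hB', Real.sign_of_pos hC', Real.sign_of_pos hd]
        norm_num
    · replace hi : p 1 ∈ interior (convexHull ℝ (p '' {j | j ≠ 1})) := hi
      rw [m1] at hi
      obtain ⟨g1, g2, g3⟩ := hi
      rcases hC.lt_or_gt with hd | hd
      · have hD' : cross (p 1) (p 2) (p 3) < 0 := by have := neg_of_div_pos_neg g1 hd; linarith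
        have hB' : cross (p 0) (p 1) (p 3) < 0 := by have := neg_of_div_pos_neg g2 hd; linarith
        have hA' : 0 < cross (p 0) (p 1) (p 2) := by have := neg_of_div_pos_neg g3 hd; linarith
        rw [Real.sign_of_pos hA', Real.sign_of_neg hB', Real.sign_of_neg hd, Real.sign_of_neg hD']
        norm_num
      · have hD' : 0 < cross (p 1) (p 2) (p 3) := by have := pos_of_div_pos_pos g1 hd; linarith
        have hB' : 0 < cross (p 0) (p 1) (p 3) := by have := pos_of_div_pos_pos g2 hd; linarith
        have hA' : cross (p 0) (p 1) (p 2) < 0 := by have := pos_of_div_pos_pos g3 hd; linarith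
        rw [Real.sign_of_neg hA', Real.sign_of_pos hB', Real.sign_of_pos hd, Real.sign_of_pos hD']
        norm_num
    · replace hi : p 2 ∈ interior (convexHull ℝ (p '' {j | j ≠ 2})) := hi
      rw [m2] at hi
      obtain ⟨g1, g2, g3⟩ := hi
      rcases hB.lt_or_gt with hd | hd
      · have hD' : 0 < cross (p 1) (p 2) (p 3) := by have := neg_of_div_pos_neg g1 hd; linarith
        have hC' : cross (p 0) (p 2) (p 3) < 0 := by have := neg_of_div_pos_neg g2 hd; linarith
        have hA' : cross (p 0) (p 1) (p 2) < 0 := by have := neg_of_div_pos_neg g3 hd; linarith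
        rw [Real.sign_of_neg hA', Real.sign_of_neg hd, Real.sign_of_neg hC', Real.sign_of_pos hD']
        norm_num
      · have hD' : cross (p 1) (p 2) (p 3) < 0 := by have := pos_of_div_pos_pos g1 hd; linarith
        have hC' : 0 < cross (p 0) (p 2) (p 3) := by have := pos_of_div_pos_pos g2 hd; linarith
        have hA' : 0 < cross (p 0) (p 1) (p 2) := by have := pos_of_div_pos_pos g3 hd; linarith
        rw [Real.sign_of_pos hA', Real.sign_of_pos hd, Real.sign_of_pos hC', Real.sign_of_neg hD']
        norm_num
    · replace hi : p 3 ∈ interior (convexHull ℝ (p '' {j | j ≠ 3})) := hi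
      rw [m3] at hi
      obtain ⟨g1, g2, g3⟩ := hi
      rcases hA.lt_or_gt with hd | hd
      · have hD' : cross (p 1) (p 2) (p 3) < 0 := by have := neg_of_div_pos_neg g1 hd; linarith
        have hC' : 0 < cross (p 0) (p 2) (p 3) := by have := neg_of_div_pos_neg g2 hd; linarith
        have hB' : cross (p 0) (p 1) (p 3) < 0 := by have := neg_of_div_pos_neg g3 hd; linarith
        rw [Real.sign_of_neg hd, Real.sign_of_neg hB', Real.sign_of_pos hC', Real.sign_of_neg hD']
        norm_num
      · have hD' : 0 < cross (p 1) (p 2) (p 3) := by have := pos_of_div_pos_pos g1 hd; linarith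
        have hC' : cross (p 0) (p 2) (p 3) < 0 := by have := pos_of_div_pos_pos g2 hd; linarith
        have hB' : 0 < cross (p 0) (p 1) (p 3) := by have := pos_of_div_pos_pos g3 hd; linarith
        rw [Real.sign_of_pos hd, Real.sign_of_pos hB', Real.sign_of_neg hC', Real.sign_of_pos hD']
        norm_num
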